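/- arXiv:2003.14201 — 2 statements merged into one kernel-verified Lean document; each statement's English description precedes it below -/
import Mathlib

section
/- Let π_p ⊆ Λ²W* be the subspace spanned by e₁∧e₄ + e₂∧e₃, e₁∧e₅ + e₃∧e₄, e₁∧e₆ + e₂∧e₄. Let A ⊆ Λ²W* be a linear subspace such that every ω ∈ A has rank at most 4, and suppose A contains g·π_p for some g ∈ GL(W). Then there exists a 3-dimensional subspace U of W such that α(u,u') = 0 for all α ∈ A and all u, u' ∈ U; in particular A is nonstable. -/
/-
The Pfaffian of a skew 6×6 matrix squares to its determinant, so it vanishes on every form of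
rank ≤ 4. After translating `A` by `g⁻¹` we may assume `π_p ⊆ A`. For `β ∈ A` the Pfaffian of
`β + t₀ω₀ + t₁ω₁ + t₂ω₂` is then a vanishing cubic in `t`, and its coefficients of `t₀t₂`, `t₀t₁`,
`t₀²` are `β₃₄`, `-β₃₅`, `β₄₅`. Hence all of `A` vanishes on `span (e 3, e 4, e 5)`, and the image
of this span under `g⁻¹` is isotropic for the original `A`.
-/

open Matrix

noncomputable section

abbrev W : Type := Fin 6 → ℂ
abbrev Form : Type := Matrix (Fin 6) (Fin 6) ℂ

/-- The skew-symmetric bilinear form associated to a matrix: `ω(u,v) = uᵀ M v`. -/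
def Form.apply (M : Form) (u v : W) : ℂ := u ⬝ᵥ M *ᵥ v

/-- A matrix represents a skew-symmetric (alternating) bilinear form iff `Mᵀ = -M`. -/
def Form.IsSkew (M : Form) : Prop := Mᵀ = -M

/-- Standard basis vectors of `W` (also used as the dual basis of `W*`). -/
def e (i : Fin 6) : Fin 6 → ℂ := Pi.single i 1

/-- Wedge of two covectors: `(φ∧ψ)(u,u') = φ(u)ψ(u') − ψ(u)φ(u')`. -/
def wedge (φ ψ : Fin 6 → ℂ) : Form := vecMulVec φ ψ - vecMulVec ψ φ

/-- Kernel of the linear map `u ↦ ω(u,·)`, i.e. of `u ↦ Mᵀ u`. -/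
def Form.kernel (M : Form) : Submodule ℂ W := LinearMap.ker (Matrix.mulVecLin Mᵀ)

/-- The action of `g ∈ GL(W)` on forms: `(g·ω)(u,u') = ω(gu,gu')`, as a linear map on forms. -/
def actLin (g : Matrix (Fin 6) (Fin 6) ℂ) : Form →ₗ[ℂ] Form where
  toFun M := gᵀ * M * g
  map_add' M N := by simp [add_mul, mul_add]
  map_smul' c M := by simp [mul_smul_comm, smul_mul_assoc]

/-- The geometric criterion for non-stability (Theorem 2.3(2)). -/
def Nonstable (A : Submodule ℂ Form) : Prop :=
  ∃ s : ℕ, s ∈ ({1, 2, 3} : Set ℕ) ∧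
    ∃ U U' : Submodule ℂ W, U ≤ U' ∧
      Module.finrank ℂ U = s ∧ Module.finrank ℂ U' = 6 - s ∧
      ∀ M ∈ A, ∀ u ∈ U, ∀ u' ∈ U', Form.apply M u u' = 0

/-- The geometric criterion for non-semistability (Theorem 2.3(1)). -/
def NonSemistable (A : Submodule ℂ Form) : Prop :=
  ∃ s : ℕ, s ∈ ({1, 2, 3} : Set ℕ) ∧
    ∃ U U' : Submodule ℂ W, U ≤ U' ∧
      Module.finrank ℂ U = s ∧ Module.finrank ℂ U' = 7 - s ∧
      ∀ M ∈ A, ∀ u ∈ U, ∀ u' ∈ U', Form.apply M u u' = 0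

/-- The plane `π_g` of general type. -/
def pi_g : Submodule ℂ Form :=
  Submodule.span ℂ {wedge (e 0) (e 3) + wedge (e 1) (e 4),
    wedge (e 0) (e 5) + wedge (e 2) (e 4),
    wedge (e 1) (e 5) - wedge (e 2) (e 3)}


/-- The plane `π_p`. -/
def pi_p : Submodule ℂ Form :=
  Submodule.span ℂ {wedge (e 0) (e 3) + wedge (e 1) (e 2),
    wedge (e 0) (e 4) + wedge (e 2) (e 3),
    wedge (e 0) (e 5) + wedge (e 1) (e 3)}

def pfaffian (M : Form) : ℂ :=
  M 0 1 * M 2 3 * M 4 5 - M 0 1 * M 2 4 * M 3 5 + M 0 1 * M 2 5 * M 3 4 - M 0 2 * M 1 3 * M 4 5 +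
  M 0 2 * M 1 4 * M 3 5 - M 0 2 * M 1 5 * M 3 4 + M 0 3 * M 1 2 * M 4 5 - M 0 3 * M 1 4 * M 2 5 +
  M 0 3 * M 1 5 * M 2 4 - M 0 4 * M 1 2 * M 3 5 + M 0 4 * M 1 3 * M 2 5 - M 0 4 * M 1 5 * M 2 3 +
  M 0 5 * M 1 2 * M 3 4 - M 0 5 * M 1 3 * M 2 4 + M 0 5 * M 1 4 * M 2 3

lemma det_skew_six_eq_sq (a01 a02 a03 a04 a05 a12 a13 a14 a15 a23 a24 a25 a34 a35 a45 : ℂ) :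
    (!![0, a01, a02, a03, a04, a05; -a01, 0, a12, a13, a14, a15; -a02, -a12, 0, a23, a24, a25;
      -a03, -a13, -a23, 0, a34, a35; -a04, -a14, -a24, -a34, 0, a45;
      -a05, -a15, -a25, -a35, -a45, 0] : Form).det =
    (a01 * a23 * a45 - a01 * a24 * a35 + a01 * a25 * a34 - a02 * a13 * a45 + a02 * a14 * a35 -
      a02 * a15 * a34 + a03 * a12 * a45 - a03 * a14 * a25 + a03 * a15 * a24 - a04 * a12 * a35 +
      a04 * a13 * a25 - a04 * a15 * a23 + a05 * a12 * a34 - a05 * a13 * a24 + a05 * a14 * a23) ^ 2 := by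
  simp only [det_succ_row_zero, Fin.sum_univ_succ, Fin.sum_univ_zero, submatrix_apply,
    Fin.zero_succAbove, Fin.succ_succAbove_zero, Fin.succ_succAbove_succ, of_apply, cons_val_zero,
    cons_val_succ, det_isEmpty, Fin.val_zero, Fin.val_succ, pow_succ, pow_zero]
  ring

namespace Form.IsSkew

variable {M : Form}

lemma apply_swap (hM : M.IsSkew) (i j : Fin 6) : M j i = -M i j := by
  simpa using congrFun (congrFun hM i) j

lemma diag_eq_zero (hM : M.IsSkew) (i : Fin 6) : M i i = 0 := by
  linear_combination hM.apply_swap i i / 2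

lemma det_eq_pfaffian_sq (hM : M.IsSkew) : M.det = pfaffian M ^ 2 := by
  have hM_eq : M = !![0, M 0 1, M 0 2, M 0 3, M 0 4, M 0 5;
      -M 0 1, 0, M 1 2, M 1 3, M 1 4, M 1 5;
      -M 0 2, -M 1 2, 0, M 2 3, M 2 4, M 2 5;
      -M 0 3, -M 1 3, -M 2 3, 0, M 3 4, M 3 5;
      -M 0 4, -M 1 4, -M 2 4, -M 3 4, 0, M 4 5;
      -M 0 5, -M 1 5, -M 2 5, -M 3 5, -M 4 5, 0] := by
    ext i j
    fin_cases i <;> fin_cases j <;> first | rfl | exact hM.diag_eq_zero _ | exact hM.apply_swap _ _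
  rw [hM_eq, det_skew_six_eq_sq, pfaffian]
  simp

lemma pfaffian_eq_zero_of_rank_le_four (hM : M.IsSkew) (hrk : M.rank ≤ 4) : pfaffian M = 0 := by
  have hdet : M.det = 0 := by
    by_contra hne
    have := M.rank_of_isUnit ((M.isUnit_iff_isUnit_det).mpr (isUnit_iff_ne_zero.mpr hne))
    simp [this] at hrk
  simpa [hM.det_eq_pfaffian_sq] using hdet

end Form.IsSkew

def ω : Fin 3 → Form :=
  ![wedge (e 0) (e 3) + wedge (e 1) (e 2),
    wedge (e 0) (e 4) + wedge (e 2) (e 3),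
    wedge (e 0) (e 5) + wedge (e 1) (e 3)]

lemma ω_mem_pi_p (i : Fin 3) : ω i ∈ pi_p :=
  Submodule.subset_span (by fin_cases i <;> simp [ω])

lemma entries_eq_zero_of_pfaffian_eq_zero (β : Form)
    (h : ∀ t : Fin 3 → ℂ, pfaffian (β + ∑ i, t i • ω i) = 0) :
    β 3 4 = 0 ∧ β 3 5 = 0 ∧ β 4 5 = 0 := by
  set q := fun t : Fin 3 → ℂ => pfaffian (β + ∑ i, t i • ω i) with hq
  -- Finite differences reading off the coefficients of `t₀t₂`, `t₀t₁`, `t₀²` of the cubic `q`.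
  have h34 : q ![1, 0, 1] - q ![1, 0, 0] - q ![0, 0, 1] + q 0 = β 3 4 := by
    simp [hq, pfaffian, ω, wedge, e, Fin.sum_univ_three, vecMulVec_apply]
    ring
  have h35 : q ![1, 1, 0] - q ![1, 0, 0] - q ![0, 1, 0] + q 0 = -β 3 5 := by
    simp [hq, pfaffian, ω, wedge, e, Fin.sum_univ_three, vecMulVec_apply]
    ring
  have h45 : q ![1, 0, 0] + q ![-1, 0, 0] - 2 * q 0 = 2 * β 4 5 := by
    simp [hq, pfaffian, ω, wedge, e, Fin.sum_univ_three, vecMulVec_apply]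
    ring
  simp only [hq, h] at h34 h35 h45
  refine ⟨by simpa using h34.symm, by simpa using h35.symm, by simpa using h45.symm⟩

lemma actLin_actLin (P Q M : Form) : actLin Q (actLin P M) = actLin (P * Q) M := by
  simp only [actLin, LinearMap.coe_mk, AddHom.coe_mk, transpose_mul, Matrix.mul_assoc]

lemma actLin_one (M : Form) : actLin 1 M = M := by
  simp [actLin]

lemma Form.IsSkew.actLin {M : Form} (hM : M.IsSkew) (P : Form) : (actLin P M).IsSkew := by
  change (Pᵀ * M * P)ᵀ = -(Pᵀ * M * P)
  rw [transpose_mul, transpose_mul, transpose_transpose, show Mᵀ = -M from hM]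
  simp [Matrix.mul_assoc]

lemma rank_actLin_le (P M : Form) : (actLin P M).rank ≤ M.rank :=
  (rank_mul_le_left _ _).trans (rank_mul_le_right _ _)

lemma Form.apply_mulVec (M P : Form) (x y : W) :
    Form.apply M (P *ᵥ x) (P *ᵥ y) = Form.apply (actLin P M) x y := by
  simp only [Form.apply, actLin, LinearMap.coe_mk, AddHom.coe_mk, ← mulVec_mulVec,
    dotProduct_mulVec, vecMul_transpose]

lemma Form.apply_e (M : Form) (i j : Fin 6) : Form.apply M (e i) (e j) = M i j := by
  simp [Form.apply, e, mulVec_single, single_dotProduct]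

lemma Form.apply_eq_zero_of_mem_span {M : Form} {s : Set W}
    (h : ∀ x ∈ s, ∀ y ∈ s, Form.apply M x y = 0) :
    ∀ x ∈ Submodule.span ℂ s, ∀ y ∈ Submodule.span ℂ s, Form.apply M x y = 0 := by
  simp only [Form.apply, ← Matrix.toLinearMap₂'_apply'] at h ⊢
  intro x hx y hy
  induction hx using Submodule.span_induction with
  | mem x hx =>
    induction hy using Submodule.span_induction with
    | mem y hy => exact h x hx y hy
    | zero => simp
    | add y y' _ _ hy hy' => simp [hy, hy']
    | smul c y _ hy => simp [hy]
  | zero => simp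
  | add x x' _ _ hx hx' => simp [hx, hx']
  | smul c x _ hx => simp [hx]

def Isotropic (A : Submodule ℂ Form) (U : Submodule ℂ W) : Prop :=
  ∀ α ∈ A, ∀ u ∈ U, ∀ u' ∈ U, Form.apply α u u' = 0

def span345 : Submodule ℂ W := Submodule.span ℂ (Set.range (e ∘ ![3, 4, 5]))

lemma finrank_span345 : Module.finrank ℂ span345 = 3 := by
  have he : ⇑(Pi.basisFun ℂ (Fin 6)) = e := funext (Pi.basisFun_apply ℂ (Fin 6))
  have hind : LinearIndependent ℂ (e ∘ ![3, 4, 5]) :=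
    he ▸ (Pi.basisFun ℂ (Fin 6)).linearIndependent.comp ![3, 4, 5] (by decide)
  rw [span345, finrank_span_eq_card hind, Fintype.card_fin]

lemma isotropic_span345 {B : Submodule ℂ Form} (hskew : ∀ M ∈ B, M.IsSkew)
    (hrk : ∀ M ∈ B, M.rank ≤ 4) (hpi : pi_p ≤ B) : Isotropic B span345 := by
  intro β hβ
  have hpf (t : Fin 3 → ℂ) : pfaffian (β + ∑ i, t i • ω i) = 0 := by
    have hmem : β + ∑ i, t i • ω i ∈ B :=
      B.add_mem hβ (B.sum_mem fun i _ => B.smul_mem _ (hpi (ω_mem_pi_p i)))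
    exact (hskew _ hmem).pfaffian_eq_zero_of_rank_le_four (hrk _ hmem)
  obtain ⟨h34, h35, h45⟩ := entries_eq_zero_of_pfaffian_eq_zero β hpf
  have hβ_skew := hskew β hβ
  apply Form.apply_eq_zero_of_mem_span
  rintro _ ⟨k, rfl⟩ _ ⟨l, rfl⟩
  rw [Function.comp_apply, Function.comp_apply, Form.apply_e]
  fin_cases k <;> fin_cases l <;>
    simp [h34, h35, h45, hβ_skew.diag_eq_zero, hβ_skew.apply_swap 3, hβ_skew.apply_swap 4]

lemma Isotropic.map_mulVecLin {A : Submodule ℂ Form} {U : Submodule ℂ W} (P : Form)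
    (h : Isotropic (A.map (actLin P)) U) : Isotropic A (U.map P.mulVecLin) := by
  rintro α hα _ ⟨x, hx, rfl⟩ _ ⟨y, hy, rfl⟩
  rw [mulVecLin_apply, mulVecLin_apply, Form.apply_mulVec]
  exact h _ (Submodule.mem_map_of_mem hα) x hx y hy

lemma Isotropic.nonstable {A : Submodule ℂ Form} {U : Submodule ℂ W}
    (h : Isotropic A U) (hU : Module.finrank ℂ U = 3) : Nonstable A :=
  ⟨3, by simp, U, U, le_rfl, hU, hU, h⟩

/-- a linear system of generic rank ≤ 4 containing a translate of `π_p`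
admits a 3-dimensional isotropic subspace; in particular it is nonstable. -/
theorem statement6 (A : Submodule ℂ Form) (hA : ∀ M ∈ A, Form.IsSkew M)
    (hrk : ∀ M ∈ A, Matrix.rank M ≤ 4)
    (g : GL (Fin 6) ℂ)
    (hg : Submodule.map (actLin (g : Matrix (Fin 6) (Fin 6) ℂ)) pi_p ≤ A) :
    (∃ U : Submodule ℂ W, Module.finrank ℂ U = 3 ∧
      ∀ α ∈ A, ∀ u ∈ U, ∀ u' ∈ U, Form.apply α u u' = 0) ∧ Nonstable A := by
  set G' : Form := ↑g⁻¹
  have hpi : pi_p ≤ A.map (actLin G') := fun M hM =>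
    ⟨_, hg (Submodule.mem_map_of_mem hM), by rw [actLin_actLin, g.mul_inv, actLin_one]⟩
  have hiso : Isotropic A (span345.map G'.mulVecLin) := by
    refine Isotropic.map_mulVecLin G' (isotropic_span345 ?_ ?_ hpi)
    · rintro _ ⟨α, hα, rfl⟩
      exact (hA α hα).actLin G'
    · rintro _ ⟨α, hα, rfl⟩
      exact (rank_actLin_le G' α).trans (hrk α hα)
  have hU : Module.finrank ℂ (span345.map G'.mulVecLin) = 3 := by
    rw [← (Submodule.equivMapOfInjective _ (mulVec_injective_of_isUnit g⁻¹.isUnit) _).finrank_eq,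
      finrank_span345]
  exact ⟨⟨_, hU, hiso⟩, hiso.nonstable hU⟩
end
end

section
/- Let A ⊆ Λ²W* be a linear subspace with dim A ≤ 3 such that every ω ∈ A has rank at most 4. Then A is nonstable: there exist an integer s ∈ {1,2,3} and linear subspaces U ⊆ U' of W with dim U = s and dim U' = 6−s such that ω(u,u') = 0 for all ω ∈ A, u ∈ U, u' ∈ U'. -/
open Matrix

noncomputable section

/-!
Write `A = ⟨ω₀, ω₁, ω₂⟩`; each `ωᵢ` has a kernel of dimension at least `2`. Restricting to planes
in these kernels turns the search for nonzero `vᵢ ∈ ker ωᵢ` with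
`ω₀(v₁, v₂) = ω₁(v₀, v₂) = ω₂(v₀, v₁) = 0` into a problem about three `2 × 2` matrices, which is
solved by an eigenvector. Then `T = ⟨v₀, v₁, v₂⟩` is isotropic for all of `A`, and since `T` meets
every `ker ωᵢ`, the common orthogonal of `T` has codimension at most `3 (dim T - 1)`.
If `dim T = 1` this gives `s = 1`; if `dim T = 3`, then `s = 3` with `U = U' = T`; if `dim T = 2`,
the orthogonal has dimension at least `3`, so `T` extends by an orthogonal vector to an isotropic
`3`-space.
-/

open Module Submodule
open LinearMap (BilinForm)

section TwoByTwo

variable {K : Type*} [Field K] [IsAlgClosed K]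

theorem exists_ne_zero_dotProduct_mulVec_eq_zero_pair (P Q : Matrix (Fin 2) (Fin 2) K) :
    ∃ x y : Fin 2 → K, x ≠ 0 ∧ y ≠ 0 ∧ x ⬝ᵥ P *ᵥ y = 0 ∧ x ⬝ᵥ Q *ᵥ y = 0 := by
  by_cases hQ : Q.det = 0
  · obtain ⟨y, hy, hQy⟩ := exists_mulVec_eq_zero_iff.mpr hQ
    obtain ⟨x, hx, hxPy⟩ := exists_ne_zero_dotProduct_eq_zero (P *ᵥ y)
    exact ⟨x, y, hx, hy, hxPy, by simp [hQy]⟩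
  · -- for an eigenvector `y` of `Q⁻¹ * P`, the vectors `P *ᵥ y` and `Q *ᵥ y` are parallel
    obtain ⟨c, hc⟩ := Module.End.exists_eigenvalue (toLin' (Q⁻¹ * P))
    obtain ⟨y, hy⟩ := hc.exists_hasEigenvector
    have hPy : P *ᵥ y = c • Q *ᵥ y := by
      have := congrArg (Q *ᵥ ·) hy.apply_eq_smul
      rwa [toLin'_apply, mulVec_mulVec, mul_nonsing_inv_cancel_left _ _ (isUnit_iff_ne_zero.mpr hQ),
        mulVec_smul] at this
    obtain ⟨x, hx, hxQy⟩ := exists_ne_zero_dotProduct_eq_zero (Q *ᵥ y)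
    exact ⟨x, y, hx, hy.2, by rw [hPy, dotProduct_smul, hxQy, smul_zero], hxQy⟩

theorem exists_ne_zero_dotProduct_mulVec_eq_zero_triple (B₀ B₁ B₂ : Matrix (Fin 2) (Fin 2) K) :
    ∃ x y z : Fin 2 → K, x ≠ 0 ∧ y ≠ 0 ∧ z ≠ 0 ∧
      y ⬝ᵥ B₀ *ᵥ z = 0 ∧ x ⬝ᵥ B₁ *ᵥ z = 0 ∧ x ⬝ᵥ B₂ *ᵥ y = 0 := by
  by_cases hB₀ : B₀.det = 0
  · obtain ⟨z, hz, hB₀z⟩ := exists_mulVec_eq_zero_iff.mpr hB₀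
    obtain ⟨x, hx, hxz⟩ := exists_ne_zero_dotProduct_eq_zero (B₁ *ᵥ z)
    obtain ⟨y, hy, hxy⟩ := exists_ne_zero_dotProduct_eq_zero (x ᵥ* B₂)
    exact ⟨x, y, z, hx, hy, hz, by simp [hB₀z], hxz, by rwa [dotProduct_mulVec, dotProduct_comm]⟩
  · -- `y := J *ᵥ B₀ *ᵥ z` is `B₀`-orthogonal to `z`, and nonzero when `z` is
    let J : Matrix (Fin 2) (Fin 2) K := !![0, -1; 1, 0]
    obtain ⟨x, z, hx, hz, h₁, h₂⟩ :=
      exists_ne_zero_dotProduct_mulVec_eq_zero_pair B₁ (B₂ * J * B₀)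
    refine ⟨x, J *ᵥ B₀ *ᵥ z, z, hx, fun hy => hz ?_, hz, ?_, h₁, by
      rwa [mulVec_mulVec, mulVec_mulVec]⟩
    · have hdet : (J * B₀).det ≠ 0 := by rw [det_mul]; simpa [J, det_fin_two_of] using hB₀
      by_contra hz'
      exact hdet (exists_mulVec_eq_zero_iff.mp ⟨z, hz', by rwa [← mulVec_mulVec]⟩)
    · generalize B₀ *ᵥ z = w
      simp only [J, dotProduct, mulVec, Fin.sum_univ_two, of_apply, cons_val', cons_val_fin_one,
        cons_val_zero, cons_val_one]
      ring

end TwoByTwo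

section Subspaces

variable {K V : Type*} [DivisionRing K] [AddCommGroup V] [Module K V]

theorem Submodule.exists_fin_span_range_eq (A : Submodule K V) [FiniteDimensional K A] {n : ℕ}
    (hn : finrank K A ≤ n) : ∃ v : Fin n → V, span K (Set.range v) = A := by
  let b := Module.finBasis K A
  refine ⟨fun i => if hi : (i : ℕ) < finrank K A then b ⟨i, hi⟩ else 0, le_antisymm ?_ ?_⟩
  · rw [span_le]
    rintro _ ⟨i, rfl⟩
    dsimp only
    split_ifs <;> simp
  · calc A = span K (Set.range (A.subtype ∘ b)) := by
          rw [Set.range_comp, span_image, b.span_eq, map_subtype_top]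
      _ ≤ _ := span_mono <| by
          rintro _ ⟨j, rfl⟩
          exact ⟨⟨j, j.2.trans_le hn⟩, by simp⟩

variable [FiniteDimensional K V]

theorem Submodule.exists_le_le_finrank_eq {U U' : Submodule K V} (hUU' : U ≤ U') {n : ℕ}
    (hU : finrank K U ≤ n) (hU' : n ≤ finrank K U') :
    ∃ U'' : Submodule K V, U ≤ U'' ∧ U'' ≤ U' ∧ finrank K U'' = n := by
  induction n with
  | zero => exact ⟨U, le_rfl, hUU', by omega⟩
  | succ n ih =>
    rcases hU.eq_or_lt with hU | hU
    · exact ⟨U, le_rfl, hUU', hU⟩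
    obtain ⟨U'', hUU'', hU''U', hU''⟩ := ih (by omega) (by omega)
    obtain ⟨w, hwU', hwU''⟩ := SetLike.exists_of_lt <|
      lt_of_le_of_finrank_lt_finrank hU''U' (by omega)
    exact ⟨U'' ⊔ K ∙ w, le_sup_of_le_left hUU'',
      sup_le hU''U' ((span_singleton_le_iff_mem _ _).mpr hwU'),
      by rw [finrank_sup_span_singleton hwU'', hU'']⟩

theorem Submodule.finrank_add_finrank_le_finrank_add_finrank_inf (p q : Submodule K V) :
    finrank K p + finrank K q ≤ finrank K V + finrank K ↥(p ⊓ q) := by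
  rw [← finrank_sup_add_finrank_inf_eq]
  gcongr
  exact finrank_le _

end Subspaces

namespace LinearMap.BilinForm

variable {K V : Type*} [Field K] [AddCommGroup V] [Module K V] {B : BilinForm K V}

theorem span_le_orthogonal_span {S : Set V} (h : ∀ x ∈ S, ∀ y ∈ S, B x y = 0) :
    span K S ≤ B.orthogonal (span K S) := by
  refine span_le.mpr fun y hy => B.mem_orthogonal_iff.mpr fun x hx => ?_
  exact (span_le (p := LinearMap.ker (B.flip y)) |>.mpr fun x hx => h x hx y hy) hx

theorem sup_span_singleton_le_orthogonal (hB : B.IsAlt) {T : Submodule K V}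
    (hT : T ≤ B.orthogonal T) {w : V} (hw : w ∈ B.orthogonal T) :
    T ⊔ K ∙ w ≤ B.orthogonal (T ⊔ K ∙ w) := by
  have hwT : ∀ x ∈ T, B x w = 0 := B.mem_orthogonal_iff.mp hw
  rw [← span_eq T, ← span_union]
  refine span_le_orthogonal_span ?_
  rintro x (hx | rfl) y (hy | rfl)
  · exact B.mem_orthogonal_iff.mp (hT hy) x hx
  · exact hwT x hx
  · rw [← hB.neg_eq, hwT y hy, neg_zero]
  · exact hB.self_eq_zero _

theorem add_one_le_finrank_add_finrank_orthogonal [FiniteDimensional K V] {T : Submodule K V}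
    {v : V} (hvT : v ∈ T) (hv : v ≠ 0) (hvB : v ∈ LinearMap.ker B) :
    finrank K V + 1 ≤ finrank K T + finrank K (B.orthogonal T) := by
  rw [B.finrank_add_finrank_orthogonal' T]
  gcongr
  exact one_le_finrank_iff.mpr <| (Submodule.ne_bot_iff _).mpr ⟨v, ⟨hvT, hvB⟩, hv⟩

end LinearMap.BilinForm

section ThreeForms

variable {K V : Type*} [Field K] [AddCommGroup V] [Module K V] {B : Fin 3 → BilinForm K V}

theorem exists_ne_zero_mem_ker_triple [IsAlgClosed K]
    (hB : ∀ i, 2 ≤ finrank K (LinearMap.ker (B i))) :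
    ∃ v : Fin 3 → V, (∀ i, v i ≠ 0) ∧ (∀ i, v i ∈ LinearMap.ker (B i)) ∧
      B 0 (v 1) (v 2) = 0 ∧ B 1 (v 0) (v 2) = 0 ∧ B 2 (v 0) (v 1) = 0 := by
  choose a ha using fun i => exists_linearIndependent_of_le_finrank (hB i)
  let c (i : Fin 3) : (Fin 2 → K) →ₗ[K] V :=
    (LinearMap.ker (B i)).subtype ∘ₗ Fintype.linearCombination K (a i)
  have hc (i : Fin 3) : Function.Injective (c i) :=
    (injective_subtype _).comp (ha i).fintypeLinearCombination_injective
  let G (i j k : Fin 3) := LinearMap.toMatrix₂' K ((B i).compl₁₂ (c j) (c k))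
  have hG (i j k : Fin 3) (x y : Fin 2 → K) : B i (c j x) (c k y) = x ⬝ᵥ G i j k *ᵥ y := by
    rw [← toLinearMap₂'_apply', toLinearMap₂'_toMatrix']
    rfl
  obtain ⟨x, y, z, hx, hy, hz, h₀, h₁, h₂⟩ :=
    exists_ne_zero_dotProduct_mulVec_eq_zero_triple (G 0 1 2) (G 1 0 2) (G 2 0 1)
  refine ⟨![c 0 x, c 1 y, c 2 z], ?_, ?_, ?_⟩
  · intro i
    fin_cases i <;> simpa using (map_ne_zero_iff _ (hc _)).mpr ‹_›
  · intro i
    fin_cases i <;> exact coe_mem _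
  exact ⟨(hG 0 1 2 y z).trans h₀, (hG 1 0 2 x z).trans h₁, (hG 2 0 1 x y).trans h₂⟩

theorem apply_eq_zero_of_mem_ker_triple (hB : ∀ i, (B i).IsAlt) {v : Fin 3 → V}
    (hv : ∀ i, v i ∈ LinearMap.ker (B i)) (h₀ : B 0 (v 1) (v 2) = 0) (h₁ : B 1 (v 0) (v 2) = 0)
    (h₂ : B 2 (v 0) (v 1) = 0) (i j k : Fin 3) : B i (v j) (v k) = 0 := by
  have hl (i : Fin 3) (x : V) : B i (v i) x = 0 := by
    rw [LinearMap.mem_ker.mp (hv i), LinearMap.zero_apply]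
  have hr (i : Fin 3) (x : V) : B i x (v i) = 0 := by rw [← (hB i).neg_eq, hl, neg_zero]
  have hswap (i j k : Fin 3) (h : B i (v j) (v k) = 0) : B i (v k) (v j) = 0 := by
    rw [← (hB i).neg_eq, h, neg_zero]
  fin_cases i <;> fin_cases j <;> fin_cases k <;>
    first
    | exact hl _ _ | exact hr _ _ | exact (hB _).self_eq_zero _
    | assumption | exact hswap _ _ _ ‹_›

theorem exists_le_orthogonal_of_isAlt [IsAlgClosed K] [FiniteDimensional K V]
    (hV : finrank K V = 6) (hB : ∀ i, (B i).IsAlt)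
    (hker : ∀ i, 2 ≤ finrank K (LinearMap.ker (B i))) :
    ∃ s ∈ ({1, 2, 3} : Set ℕ), ∃ U U' : Submodule K V, U ≤ U' ∧
      finrank K U = s ∧ finrank K U' = 6 - s ∧ ∀ i, U' ≤ (B i).orthogonal U := by
  obtain ⟨v, hv, hvB, h₀, h₁, h₂⟩ := exists_ne_zero_mem_ker_triple hker
  set T := span K (Set.range v)
  have hvT (i : Fin 3) : v i ∈ T := subset_span ⟨i, rfl⟩
  have hT (i : Fin 3) : T ≤ (B i).orthogonal T := by
    refine LinearMap.BilinForm.span_le_orthogonal_span ?_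
    rintro _ ⟨j, rfl⟩ _ ⟨k, rfl⟩
    exact apply_eq_zero_of_mem_ker_triple hB hvB h₀ h₁ h₂ i j k
  set O := (B 0).orthogonal T ⊓ (B 1).orthogonal T ⊓ (B 2).orthogonal T
  have hO (i : Fin 3) : O ≤ (B i).orthogonal T := by
    fin_cases i
    · exact inf_le_left.trans inf_le_left
    · exact inf_le_left.trans inf_le_right
    · exact inf_le_right
  have hTO : T ≤ O := le_inf (le_inf (hT 0) (hT 1)) (hT 2)
  have hOT : 9 ≤ 3 * finrank K T + finrank K O := by
    have h := fun i => LinearMap.BilinForm.add_one_le_finrank_add_finrank_orthogonal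
      (hvT i) (hv i) (hvB i)
    have h₀₁ := finrank_add_finrank_le_finrank_add_finrank_inf
      ((B 0).orthogonal T) ((B 1).orthogonal T)
    have h₀₁₂ : _ ≤ _ + finrank K O := finrank_add_finrank_le_finrank_add_finrank_inf
      ((B 0).orthogonal T ⊓ (B 1).orthogonal T) ((B 2).orthogonal T)
    have := h 0; have := h 1; have := h 2
    omega
  have hT₁ : 1 ≤ finrank K T :=
    one_le_finrank_iff.mpr <| (Submodule.ne_bot_iff _).mpr ⟨v 0, hvT 0, hv 0⟩
  have hT₃ : finrank K T ≤ 3 := (finrank_range_le_card v).trans (by simp)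
  obtain hd | hd | hd : finrank K T = 1 ∨ finrank K T = 2 ∨ finrank K T = 3 := by omega
  · obtain ⟨U', hTU', hU'O, hU'⟩ := exists_le_le_finrank_eq hTO (n := 5) (by omega) (by omega)
    exact ⟨1, by simp, T, U', hTU', hd, hU', fun i => hU'O.trans (hO i)⟩
  · obtain ⟨w, hwO, hwT⟩ := SetLike.exists_of_lt <| lt_of_le_of_finrank_lt_finrank hTO (by omega)
    have hdw : finrank K ↥(T ⊔ K ∙ w) = 3 := by rw [finrank_sup_span_singleton hwT, hd]
    exact ⟨3, by simp, _, _, le_rfl, hdw, hdw, fun i =>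
      LinearMap.BilinForm.sup_span_singleton_le_orthogonal (hB i) (hT i) (hO i hwO)⟩
  · exact ⟨3, by simp, T, T, le_rfl, hd, hd, hT⟩

end ThreeForms

theorem Form.apply_eq_toBilin' (M : Form) (u v : W) : M.apply u v = toBilin' M u v :=
  (toBilin'_apply' M u v).symm

theorem Form.IsSkew.isAlt {M : Form} (hM : M.IsSkew) : (toBilin' M).IsAlt := fun u => by
  have h : u ⬝ᵥ M *ᵥ u = -(u ⬝ᵥ M *ᵥ u) := by
    conv_lhs => rw [dotProduct_mulVec, ← mulVec_transpose, hM, neg_mulVec, neg_dotProduct,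
      dotProduct_comm]
  rw [toBilin'_apply']
  linear_combination h / 2

theorem Form.ker_toBilin' (M : Form) : LinearMap.ker (toBilin' M) = M.kernel := by
  ext v
  simp [Form.kernel, LinearMap.ext_iff, toBilin'_apply', dotProduct_mulVec, dotProduct_eq_zero_iff]

theorem Form.rank_add_finrank_ker_toBilin' (M : Form) :
    M.rank + finrank ℂ (LinearMap.ker (toBilin' M)) = 6 := by
  rw [Form.ker_toBilin', ← rank_transpose, Matrix.rank, Form.kernel,
    LinearMap.finrank_range_add_finrank_ker]
  simp

theorem nonstable_span_range (M : Fin 3 → Form) (hskew : ∀ i, (M i).IsSkew)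
    (hrk : ∀ i, (M i).rank ≤ 4) : Nonstable (span ℂ (Set.range M)) := by
  obtain ⟨s, hs, U, U', hUU', hU, hU', horth⟩ :=
    exists_le_orthogonal_of_isAlt (B := fun i => toBilin' (M i)) (by simp)
      (fun i => (hskew i).isAlt) fun i => by
        have := (M i).rank_add_finrank_ker_toBilin'
        have := hrk i
        omega
  refine ⟨s, hs, U, U', hUU', hU, hU', fun N hN u hu u' hu' => ?_⟩
  rw [Form.apply_eq_toBilin']
  induction hN using span_induction with
  | mem N hN =>
    obtain ⟨i, rfl⟩ := hN
    exact LinearMap.BilinForm.mem_orthogonal_iff.mp (horth i hu') u hu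
  | zero => simp
  | add N N' _ _ hN hN' => simp [hN, hN']
  | smul c N _ hN => simp [hN]

/-- Corollary 3.10: there are no stable linear systems of generic rank
≤ 4 of (projective) dimension ≤ 2. -/
theorem statement12 (A : Submodule ℂ Form) (hA : ∀ M ∈ A, Form.IsSkew M)
    (hdim : Module.finrank ℂ A ≤ 3)
    (hrk : ∀ M ∈ A, Matrix.rank M ≤ 4) :
    Nonstable A := by
  obtain ⟨M, rfl⟩ := A.exists_fin_span_range_eq hdim
  exact nonstable_span_range M (fun i => hA _ (subset_span ⟨i, rfl⟩))
    fun i => hrk _ (subset_span ⟨i, rfl⟩)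
end
end
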